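/- The function Δ ↦ R_i(Δ) is convex on [Δ_min, Δ_max], and for every Δ with max_{A ∈ 𝒜_k} Δ_min,A ≤ Δ ≤ Δ_max one has R_i(Δ) ≤ min_{A ∈ 𝒜_k} R_A(Δ). -/

import Mathlib

noncomputable section

/-- A probability mass function on a finite type. -/
def IsPMF {T : Type*} [Fintype T] (p : T → ℝ) : Prop :=
  (∀ t, 0 ≤ p t) ∧ ∑ t, p t = 1

/-- Mutual information of a joint pmf `Q` on a product of two finite types;
terms with `Q p = 0` vanish since `0 * log _ = 0`. -/
def mutInfo {α β : Type*} [Fintype α] [Fintype β] (Q : α × β → ℝ) : ℝ :=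
  ∑ p : α × β, Q p * Real.log (Q p / ((∑ b, Q (p.1, b)) * (∑ a, Q (a, p.2))))

/-- The family `𝒜_k` of `k`-element subsets of `{1, …, m}`. -/
abbrev SetsK (m k : ℕ) := {A : Finset (Fin m) // A.card = k}

variable {m : ℕ} {X : Fin m → Type} [∀ i, Fintype (X i)] [∀ i, DecidableEq (X i)]
  [∀ i, Nonempty (X i)] {Y : Type} [Fintype Y] [Nonempty Y]

/-- Restriction of `x ∈ 𝒳_ℳ` to the coordinates in `A`. -/
def restr (A : Finset (Fin m)) (x : ∀ i, X i) : ∀ i : A, X i.1 := fun i => x i.1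

/-- The marginal pmf `P_{X_A}` of the coordinates in `A`. -/
def margA (P : (∀ i, X i) → ℝ) (A : Finset (Fin m)) (xA : ∀ i : A, X i.1) : ℝ :=
  ∑ x : ∀ i, X i, if restr A x = xA then P x else 0

/-- The modified distortion `d_A(x_A, y)`. -/
def dAk (P : (∀ i, X i) → ℝ) (d : (∀ i, X i) → Y → ℝ) (A : Finset (Fin m))
    (xA : ∀ i : A, X i.1) (y : Y) : ℝ :=
  (∑ x : ∀ i, X i, if restr A x = xA then P x * d x y else 0) / margA P A xA

/-- The fixed-set rate distortion function `R_A(Δ)`: the minimum of `I(X_A ∧ Y)` over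
joint pmfs of `(X_A, Y)` with first marginal `P_{X_A}` and `E[d_A(X_A,Y)] ≤ Δ`. -/
def RAk (P : (∀ i, X i) → ℝ) (d : (∀ i, X i) → Y → ℝ) (A : Finset (Fin m)) (Δ : ℝ) : ℝ :=
  sInf {r | ∃ Q : (∀ i : A, X i.1) × Y → ℝ, IsPMF Q ∧
    (∀ xA, ∑ y, Q (xA, y) = margA P A xA) ∧
    (∑ p : (∀ i : A, X i.1) × Y, Q p * dAk P d A p.1 p.2) ≤ Δ ∧ mutInfo Q = r}

/-- `Δ_min,A = Σ_{x_A} P_{X_A}(x_A) min_y d_A(x_A, y)`. -/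
def DminA (P : (∀ i, X i) → ℝ) (d : (∀ i, X i) → Y → ℝ) (A : Finset (Fin m)) : ℝ :=
  ∑ xA : ∀ i : A, X i.1,
    margA P A xA * Finset.univ.inf' Finset.univ_nonempty (fun y => dAk P d A xA y)

/-- A reconstruction kernel `W(·|A, x_A)`: a pmf on `𝒴` for each `A ∈ 𝒜_k` and each
value `x_A` of the sampled coordinates. -/
def IsKernelW (k : ℕ) (W : ∀ A : SetsK m k, (∀ i : A.1, X i.1) → Y → ℝ) : Prop :=
  ∀ A xA, IsPMF (W A xA)

/-- The conditional mutual information `I(X_S ∧ Y | S) = Σ_A P_S(A) I(X_A ∧ Y | S = A)`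
for a `k`-IRS `(P_S, W)`. -/
def condMI (k : ℕ) (P : (∀ i, X i) → ℝ) (PS : SetsK m k → ℝ)
    (W : ∀ A : SetsK m k, (∀ i : A.1, X i.1) → Y → ℝ) : ℝ :=
  ∑ A : SetsK m k, PS A *
    mutInfo (fun p : (∀ i : A.1, X i.1) × Y => margA P A.1 p.1 * W A p.1 p.2)

/-- The expected distortion `E[d(X,Y)]` for a `k`-IRS `(P_S, W)`. -/
def expDistIRS (k : ℕ) (P : (∀ i, X i) → ℝ) (d : (∀ i, X i) → Y → ℝ)
    (PS : SetsK m k → ℝ) (W : ∀ A : SetsK m k, (∀ i : A.1, X i.1) → Y → ℝ) : ℝ :=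
  ∑ A : SetsK m k, ∑ x : ∀ i, X i, ∑ y, PS A * P x * W A (restr A.1 x) y * d x y

/-- The SRDf `R_i(Δ)` for a `k`-IRS. -/
def Ri (k : ℕ) (P : (∀ i, X i) → ℝ) (d : (∀ i, X i) → Y → ℝ) (Δ : ℝ) : ℝ :=
  sInf {r | ∃ (PS : SetsK m k → ℝ) (W : ∀ A : SetsK m k, (∀ i : A.1, X i.1) → Y → ℝ),
    IsPMF PS ∧ IsKernelW k W ∧ expDistIRS k P d PS W ≤ Δ ∧ condMI k P PS W = r}

/-!
Everything reduces to operations on `k`-IRS schemes `(P_S, W)`. Mixing two schemes with weights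
`a, b` (sampling distribution `a P_S₁ + b P_S₂`, and for each `A` the conditional mixture of
`W₁ A` and `W₂ A`) mixes the expected distortions linearly, while the log-sum inequality makes
`I(X_A ∧ Y)` convex in the channel, so `I(X_S ∧ Y | S)` is at most the mixture of the two
values. Taking infima gives convexity of `R_i` wherever a feasible scheme exists, i.e. for
`Δ ≥ Δ_min`: a deterministic scheme concentrated on a minimising `A` has distortion `Δ_min`.
For the comparison, a test channel `Q` for `R_A` is a scheme concentrated on `A` with the same
distortion and with `I(X_S ∧ Y | S) = I(X_A ∧ Y)`, so `R_i(Δ) ≤ R_A(Δ)` as soon as the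
feasible set of `R_A(Δ)` is nonempty, which is `Δ ≥ Δ_min,A`.
-/

open Real Finset

theorem sum_mul_log_div_sum_le {ι : Type*} (s : Finset ι) {a b : ι → ℝ}
    (ha : ∀ i ∈ s, 0 ≤ a i) (hb : ∀ i ∈ s, 0 ≤ b i) (hab : ∀ i ∈ s, b i = 0 → a i = 0) :
    (∑ i ∈ s, a i) * log ((∑ i ∈ s, a i) / ∑ i ∈ s, b i) ≤ ∑ i ∈ s, a i * log (a i / b i) := by
  obtain hB | hB := (sum_nonneg hb).eq_or_lt
  · have hb0 : ∀ i ∈ s, b i = 0 := (sum_eq_zero_iff_of_nonneg hb).1 hB.symm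
    rw [← hB, div_zero, log_zero, mul_zero]
    exact sum_nonneg fun i hi => by simp [hab i hi (hb0 i hi)]
  set B := ∑ i ∈ s, b i
  have hcancel : ∀ i ∈ s, b i / B * (a i / b i) = a i / B := fun i hi => by
    rw [div_mul_eq_mul_div, mul_div_cancel_of_imp' (hab i hi)]
  have hjensen := convexOn_mul_log.map_sum_le (t := s) (w := fun i => b i / B)
    (p := fun i => a i / b i) (fun i hi => div_nonneg (hb i hi) hB.le)
    (by rw [← sum_div, div_self hB.ne']) (fun i hi => div_nonneg (ha i hi) (hb i hi))
  have hmean : ∑ i ∈ s, b i / B * (a i / b i) = (∑ i ∈ s, a i) / B := by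
    rw [sum_div]; exact sum_congr rfl hcancel
  have hvalue : ∑ i ∈ s, b i / B * (a i / b i * log (a i / b i)) =
      (∑ i ∈ s, a i * log (a i / b i)) / B := by
    rw [sum_div]
    exact sum_congr rfl fun i hi => by rw [← mul_assoc, hcancel i hi, div_mul_eq_mul_div]
  simp only [smul_eq_mul] at hjensen
  rwa [hmean, hvalue, div_mul_eq_mul_div, div_le_div_iff_of_pos_right hB] at hjensen

theorem mul_mul_log_mul_div_mul (c x y : ℝ) :
    c * x * log (c * x / (c * y)) = c * (x * log (x / y)) := by
  obtain rfl | hc := eq_or_ne c 0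
  · simp
  rw [mul_div_mul_left _ _ hc, mul_assoc]

theorem add_mul_log_div_add_le {μ ν x₁ x₂ y₁ y₂ : ℝ} (hμ : 0 ≤ μ) (hν : 0 ≤ ν)
    (hx₁ : 0 ≤ x₁) (hx₂ : 0 ≤ x₂) (hy₁ : 0 ≤ y₁) (hy₂ : 0 ≤ y₂)
    (h₁ : y₁ = 0 → x₁ = 0) (h₂ : y₂ = 0 → x₂ = 0) :
    (μ * x₁ + ν * x₂) * log ((μ * x₁ + ν * x₂) / (μ * y₁ + ν * y₂)) ≤
      μ * (x₁ * log (x₁ / y₁)) + ν * (x₂ * log (x₂ / y₂)) := by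
  have h := sum_mul_log_div_sum_le univ (a := ![μ * x₁, ν * x₂]) (b := ![μ * y₁, ν * y₂])
    (by simp [Fin.forall_fin_two]; constructor <;> positivity)
    (by simp [Fin.forall_fin_two]; constructor <;> positivity)
    (by simp [Fin.forall_fin_two]; grind)
  simpa [Fin.sum_univ_two, mul_mul_log_mul_div_mul] using h

section WeightedMix

variable {E : Type*} [AddCommGroup E] [Module ℝ E]

-- The fallback `w₁` at total weight `0` (where the quotients are `0 / 0 = 0`) keeps the value
-- in every convex set containing `w₁` and `w₂`.
def weightedMix (p₁ p₂ : ℝ) (w₁ w₂ : E) : E :=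
  if p₁ + p₂ = 0 then w₁ else (p₁ / (p₁ + p₂)) • w₁ + (p₂ / (p₁ + p₂)) • w₂

variable {p₁ p₂ : ℝ} {w₁ w₂ : E}

theorem add_smul_weightedMix (hp₁ : 0 ≤ p₁) (hp₂ : 0 ≤ p₂) :
    (p₁ + p₂) • weightedMix p₁ p₂ w₁ w₂ = p₁ • w₁ + p₂ • w₂ := by
  unfold weightedMix
  split_ifs with h
  · obtain ⟨rfl, rfl⟩ : p₁ = 0 ∧ p₂ = 0 := by constructor <;> linarith
    simp
  · rw [smul_add, smul_smul, smul_smul, mul_div_cancel₀ _ h, mul_div_cancel₀ _ h]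

theorem Convex.weightedMix_mem {K : Set E} (hK : Convex ℝ K) (hw₁ : w₁ ∈ K) (hw₂ : w₂ ∈ K)
    (hp₁ : 0 ≤ p₁) (hp₂ : 0 ≤ p₂) : weightedMix p₁ p₂ w₁ w₂ ∈ K := by
  unfold weightedMix
  split_ifs with h
  · exact hw₁
  · exact hK hw₁ hw₂ (by positivity) (by positivity) (by rw [← add_div, div_self h])

theorem ConvexOn.add_mul_weightedMix_le {K : Set E} {f : E → ℝ} (hf : ConvexOn ℝ K f)
    (hw₁ : w₁ ∈ K) (hw₂ : w₂ ∈ K) (hp₁ : 0 ≤ p₁) (hp₂ : 0 ≤ p₂) :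
    (p₁ + p₂) * f (weightedMix p₁ p₂ w₁ w₂) ≤ p₁ * f w₁ + p₂ * f w₂ := by
  unfold weightedMix
  split_ifs with h
  · obtain ⟨rfl, rfl⟩ : p₁ = 0 ∧ p₂ = 0 := by constructor <;> linarith
    simp
  · have hp : 0 < p₁ + p₂ := (add_nonneg hp₁ hp₂).lt_of_ne' h
    calc (p₁ + p₂) * f ((p₁ / (p₁ + p₂)) • w₁ + (p₂ / (p₁ + p₂)) • w₂)
        ≤ (p₁ + p₂) * ((p₁ / (p₁ + p₂)) • f w₁ + (p₂ / (p₁ + p₂)) • f w₂) := by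
          gcongr
          exact hf.2 hw₁ hw₂ (by positivity) (by positivity) (by rw [← add_div, div_self h])
      _ = p₁ * f w₁ + p₂ * f w₂ := by simp only [smul_eq_mul]; field_simp

end WeightedMix

theorem convexOn_sInf_of_exists_mix {ι : Type*} {C : Set ι} {f g : ι → ℝ} {I : Set ℝ}
    (hI : Convex ℝ I) (hf : BddBelow (f '' C)) (hfeas : ∀ Δ ∈ I, ∃ z ∈ C, g z ≤ Δ)
    (hmix : ∀ z₁ ∈ C, ∀ z₂ ∈ C, ∀ ⦃a b : ℝ⦄, 0 ≤ a → 0 ≤ b → a + b = 1 →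
      ∃ z ∈ C, g z ≤ a * g z₁ + b * g z₂ ∧ f z ≤ a * f z₁ + b * f z₂) :
    ConvexOn ℝ I fun Δ => sInf {r | ∃ z ∈ C, g z ≤ Δ ∧ f z = r} := by
  set S : ℝ → Set ℝ := fun Δ => {r | ∃ z ∈ C, g z ≤ Δ ∧ f z = r}
  have hbdd : ∀ Δ, BddBelow (S Δ) := fun Δ =>
    hf.mono fun _ ⟨z, hz, _, hr⟩ => hr ▸ Set.mem_image_of_mem f hz
  have hne : ∀ Δ ∈ I, (S Δ).Nonempty := fun Δ hΔ =>
    let ⟨z, hz, hg⟩ := hfeas Δ hΔ; ⟨f z, z, hz, hg, rfl⟩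
  refine ⟨hI, fun Δ₁ h₁ Δ₂ h₂ a b ha hb hab => ?_⟩
  simp only [smul_eq_mul]
  refine le_of_forall_pos_le_add fun ε hε => ?_
  obtain ⟨_, ⟨z₁, hz₁, hg₁, rfl⟩, hf₁⟩ := exists_lt_of_csInf_lt (hne Δ₁ h₁)
    (lt_add_of_pos_right _ hε)
  obtain ⟨_, ⟨z₂, hz₂, hg₂, rfl⟩, hf₂⟩ := exists_lt_of_csInf_lt (hne Δ₂ h₂)
    (lt_add_of_pos_right _ hε)
  obtain ⟨z, hz, hg, hfz⟩ := hmix z₁ hz₁ z₂ hz₂ ha hb hab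
  calc sInf (S (a * Δ₁ + b * Δ₂))
      ≤ f z := csInf_le (hbdd _) ⟨z, hz, hg.trans (by gcongr), rfl⟩
    _ ≤ a * f z₁ + b * f z₂ := hfz
    _ ≤ a * (sInf (S Δ₁) + ε) + b * (sInf (S Δ₂) + ε) := by gcongr
    _ = a * sInf (S Δ₁) + b * sInf (S Δ₂) + ε := by linear_combination ε * hab

section PMF

variable {α β : Type*} [Fintype β]

theorem convex_setOf_forall_isPMF : Convex ℝ {V : α → β → ℝ | ∀ a, IsPMF (V a)} :=
  fun _ hV₁ _ hV₂ _ _ hμ hν hμν a => convex_stdSimplex ℝ β (hV₁ a) (hV₂ a) hμ hν hμν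

theorem sum_mul_of_isPMF {pX : α → ℝ} {V : α → β → ℝ} (hV : ∀ a, IsPMF (V a)) (a : α) :
    ∑ b, pX a * V a b = pX a := by
  rw [← mul_sum, (hV a).2, mul_one]

theorem exists_kernel_of_sum_eq {pX : α → ℝ} (hpX : ∀ a, 0 < pX a) {Q : α × β → ℝ}
    (hQ : ∀ p, 0 ≤ Q p) (hrow : ∀ a, ∑ b, Q (a, b) = pX a) :
    ∃ V : α → β → ℝ, (∀ a, IsPMF (V a)) ∧ Q = fun p => pX p.1 * V p.1 p.2 :=
  ⟨fun a b => Q (a, b) / pX a,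
    fun a => ⟨fun b => div_nonneg (hQ _) (hpX a).le, by rw [← sum_div, hrow, div_self (hpX a).ne']⟩,
    funext fun p => (mul_div_cancel₀ _ (hpX p.1).ne').symm⟩

variable [Fintype α]

theorem IsPMF.mul_kernel {pX : α → ℝ} {V : α → β → ℝ} (hpX : IsPMF pX) (hV : ∀ a, IsPMF (V a)) :
    IsPMF fun p : α × β => pX p.1 * V p.1 p.2 :=
  ⟨fun p => mul_nonneg (hpX.1 p.1) ((hV p.1).1 p.2), by
    rw [Fintype.sum_prod_type]; simp only [sum_mul_of_isPMF hV, hpX.2]⟩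

theorem mutInfo_nonneg {Q : α × β → ℝ} (hQ : IsPMF Q) : 0 ≤ mutInfo Q := by
  have hrow : ∑ a, ∑ b, Q (a, b) = 1 := by rw [← Fintype.sum_prod_type, hQ.2]
  have hcol : ∑ b, ∑ a, Q (a, b) = 1 := by rw [sum_comm, ← Fintype.sum_prod_type, hQ.2]
  have hprod : ∑ p : α × β, (∑ b, Q (p.1, b)) * ∑ a, Q (a, p.2) = 1 := by
    simp only [Fintype.sum_prod_type, ← sum_mul_sum, hrow, hcol, one_mul]
  have h := sum_mul_log_div_sum_le univ (a := Q)
    (b := fun p => (∑ b, Q (p.1, b)) * ∑ a, Q (a, p.2)) (fun p _ => hQ.1 p)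
    (fun p _ => mul_nonneg (sum_nonneg fun _ _ => hQ.1 _) (sum_nonneg fun _ _ => hQ.1 _))
    (fun p _ hp => ?_)
  · rwa [hprod, hQ.2, div_one, log_one, mul_zero] at h
  · obtain h0 | h0 := mul_eq_zero.1 hp
    · exact (sum_eq_zero_iff_of_nonneg fun _ _ => hQ.1 _).1 h0 p.2 (mem_univ _)
    · exact (sum_eq_zero_iff_of_nonneg fun _ _ => hQ.1 _).1 h0 p.1 (mem_univ _)

theorem mutInfo_mul_kernel {pX : α → ℝ} {V : α → β → ℝ} (hV : ∀ a, IsPMF (V a)) :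
    mutInfo (fun p : α × β => pX p.1 * V p.1 p.2) =
      ∑ p : α × β, pX p.1 * V p.1 p.2 *
        log (pX p.1 * V p.1 p.2 / (pX p.1 * ∑ a, pX a * V a p.2)) := by
  simp only [mutInfo, sum_mul_of_isPMF hV]

theorem convexOn_mutInfo_mul_kernel {pX : α → ℝ} (hpX : ∀ a, 0 ≤ pX a) :
    ConvexOn ℝ {V : α → β → ℝ | ∀ a, IsPMF (V a)}
      fun V => mutInfo fun p : α × β => pX p.1 * V p.1 p.2 := by
  refine ⟨convex_setOf_forall_isPMF, fun V₁ hV₁ V₂ hV₂ μ ν hμ hν hμν => ?_⟩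
  have hV := convex_setOf_forall_isPMF hV₁ hV₂ hμ hν hμν
  dsimp only
  rw [mutInfo_mul_kernel hV, mutInfo_mul_kernel hV₁, mutInfo_mul_kernel hV₂, smul_eq_mul,
    smul_eq_mul, mul_sum, mul_sum, ← sum_add_distrib]
  refine sum_le_sum fun p _ => ?_
  have hnum : pX p.1 * (μ • V₁ + ν • V₂) p.1 p.2 =
      μ * (pX p.1 * V₁ p.1 p.2) + ν * (pX p.1 * V₂ p.1 p.2) := by
    simp only [Pi.add_apply, Pi.smul_apply, smul_eq_mul]; ring
  have hden : pX p.1 * ∑ a, pX a * (μ • V₁ + ν • V₂) a p.2 =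
      μ * (pX p.1 * ∑ a, pX a * V₁ a p.2) + ν * (pX p.1 * ∑ a, pX a * V₂ a p.2) := by
    simp only [Pi.add_apply, Pi.smul_apply, smul_eq_mul, mul_add, sum_add_distrib, mul_sum]
    congr 1 <;> exact sum_congr rfl fun _ _ => by ring
  have hsupp : ∀ V : α → β → ℝ, (∀ a, IsPMF (V a)) → pX p.1 * ∑ a, pX a * V a p.2 = 0 →
      pX p.1 * V p.1 p.2 = 0 := fun V hV h => by
    obtain h | h := mul_eq_zero.1 h
    · rw [h, zero_mul]
    · exact (sum_eq_zero_iff_of_nonneg fun a _ => mul_nonneg (hpX a) ((hV a).1 _)).1 h _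
        (mem_univ _)
  rw [hnum, hden]
  exact add_mul_log_div_add_le hμ hν
    (mul_nonneg (hpX p.1) ((hV₁ p.1).1 p.2)) (mul_nonneg (hpX p.1) ((hV₂ p.1).1 p.2))
    (mul_nonneg (hpX p.1) (sum_nonneg fun a _ => mul_nonneg (hpX a) ((hV₁ a).1 p.2)))
    (mul_nonneg (hpX p.1) (sum_nonneg fun a _ => mul_nonneg (hpX a) ((hV₂ a).1 p.2)))
    (hsupp V₁ hV₁) (hsupp V₂ hV₂)

end PMF

section Marginal

variable {P : (∀ i, X i) → ℝ} (A : Finset (Fin m))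

omit [∀ i, Nonempty (X i)] in
theorem margA_nonneg (hP : ∀ x, 0 ≤ P x) (xA : ∀ i : A, X i.1) : 0 ≤ margA P A xA :=
  sum_nonneg fun x _ => by split_ifs <;> simp [hP x]

theorem margA_pos (hP : ∀ x, 0 < P x) (xA : ∀ i : A, X i.1) : 0 < margA P A xA := by
  classical
  let x : ∀ i, X i := fun i => if h : i ∈ A then xA ⟨i, h⟩ else Classical.arbitrary (X i)
  have hx : restr A x = xA := funext fun i => by simp [x, restr]
  exact sum_pos' (fun x _ => by split_ifs <;> simp [(hP x).le]) ⟨x, mem_univ x, by simp [hx, hP x]⟩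

omit [∀ i, Nonempty (X i)] in
theorem isPMF_margA (hP : IsPMF P) : IsPMF (margA P A) := by
  refine ⟨margA_nonneg A hP.1, ?_⟩
  rw [← hP.2]
  simp only [margA]
  rw [sum_comm]
  exact sum_congr rfl fun x _ => by simp

omit [Nonempty Y] in
theorem sum_mul_restr_eq (hP : ∀ x, 0 < P x) (d : (∀ i, X i) → Y → ℝ)
    (f : (∀ i : A, X i.1) → Y → ℝ) :
    ∑ x, ∑ y, P x * f (restr A x) y * d x y =
      ∑ p : (∀ i : A, X i.1) × Y, margA P A p.1 * f p.1 p.2 * dAk P d A p.1 p.2 := by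
  have hmargA : ∀ xA y, margA P A xA * dAk P d A xA y =
      ∑ x, if restr A x = xA then P x * d x y else 0 := fun xA y =>
    mul_div_cancel₀ _ (margA_pos A hP xA).ne'
  simp only [Fintype.sum_prod_type, mul_comm _ (f _ _), mul_assoc, hmargA, mul_sum, mul_ite,
    mul_zero]
  calc ∑ x, ∑ y, f (restr A x) y * (P x * d x y)
      = ∑ x, ∑ xA, ∑ y, if restr A x = xA then f xA y * (P x * d x y) else 0 := by
        refine sum_congr rfl fun x _ => ?_
        rw [sum_comm]
        simp
    _ = _ := by
        rw [sum_comm]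
        exact sum_congr rfl fun _ _ => sum_comm

end Marginal

section Scheme

variable {k : ℕ} {P : (∀ i, X i) → ℝ} {d : (∀ i, X i) → Y → ℝ}

omit [∀ i, Nonempty (X i)] [Nonempty Y] in
theorem condMI_nonneg (hP : IsPMF P) {PS : SetsK m k → ℝ} (hPS : ∀ A, 0 ≤ PS A)
    {W : ∀ A : SetsK m k, (∀ i : A.1, X i.1) → Y → ℝ} (hW : IsKernelW k W) :
    0 ≤ condMI k P PS W :=
  sum_nonneg fun A _ => mul_nonneg (hPS A) (mutInfo_nonneg ((isPMF_margA A.1 hP).mul_kernel (hW A)))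

theorem exists_scheme_of_kernel (hP : ∀ x, 0 < P x) (A : SetsK m k)
    {V : (∀ i : A.1, X i.1) → Y → ℝ} (hV : ∀ xA, IsPMF (V xA)) :
    ∃ (PS : SetsK m k → ℝ) (W : ∀ A : SetsK m k, (∀ i : A.1, X i.1) → Y → ℝ),
      IsPMF PS ∧ IsKernelW k W ∧
      expDistIRS k P d PS W =
        ∑ p : (∀ i : A.1, X i.1) × Y, margA P A.1 p.1 * V p.1 p.2 * dAk P d A.1 p.1 p.2 ∧
      condMI k P PS W = mutInfo fun p : (∀ i : A.1, X i.1) × Y => margA P A.1 p.1 * V p.1 p.2 := by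
  classical
  let W : ∀ A : SetsK m k, (∀ i : A.1, X i.1) → Y → ℝ :=
    Function.update (fun _ _ => Pi.single (Classical.arbitrary Y) 1) A V
  have hWA : W A = V := Function.update_self ..
  refine ⟨Pi.single A 1, W, single_mem_stdSimplex ℝ A,
    (Function.forall_update_iff _
      fun (A : SetsK m k) (w : (∀ i : A.1, X i.1) → Y → ℝ) => ∀ xA, IsPMF (w xA)).2
      ⟨hV, fun _ _ _ => single_mem_stdSimplex ℝ _⟩, ?_, ?_⟩
  · rw [← hWA, ← sum_mul_restr_eq A.1 hP, expDistIRS,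
      Fintype.sum_eq_single A fun A' hA' => by simp [hA']]
    simp
  · rw [← hWA, condMI, Fintype.sum_eq_single A fun A' hA' => by simp [hA']]
    simp

omit [∀ i, Nonempty (X i)] in
theorem exists_kernel_sum_eq_DminA (A : Finset (Fin m)) :
    ∃ V : (∀ i : A, X i.1) → Y → ℝ, (∀ xA, IsPMF (V xA)) ∧
      ∑ p : (∀ i : A, X i.1) × Y, margA P A p.1 * V p.1 p.2 * dAk P d A p.1 p.2 = DminA P d A := by
  classical
  choose y hy using fun xA : ∀ i : A, X i.1 =>
    exists_mem_eq_inf' univ_nonempty (dAk P d A xA)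
  refine ⟨fun xA => Pi.single (y xA) 1, fun xA => single_mem_stdSimplex ℝ _, ?_⟩
  rw [Fintype.sum_prod_type, DminA]
  refine sum_congr rfl fun xA _ => ?_
  simp [Pi.single_apply, (hy xA).2]

omit [∀ i, Nonempty (X i)] [Nonempty Y] in
theorem exists_scheme_mix (hP : ∀ x, 0 ≤ P x) {PS₁ PS₂ : SetsK m k → ℝ}
    {W₁ W₂ : ∀ A : SetsK m k, (∀ i : A.1, X i.1) → Y → ℝ} (hPS₁ : IsPMF PS₁) (hPS₂ : IsPMF PS₂)
    (hW₁ : IsKernelW k W₁) (hW₂ : IsKernelW k W₂) {a b : ℝ} (ha : 0 ≤ a) (hb : 0 ≤ b)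
    (hab : a + b = 1) :
    ∃ (PS : SetsK m k → ℝ) (W : ∀ A : SetsK m k, (∀ i : A.1, X i.1) → Y → ℝ),
      IsPMF PS ∧ IsKernelW k W ∧
      expDistIRS k P d PS W = a * expDistIRS k P d PS₁ W₁ + b * expDistIRS k P d PS₂ W₂ ∧
      condMI k P PS W ≤ a * condMI k P PS₁ W₁ + b * condMI k P PS₂ W₂ := by
  have h₁ : ∀ A, 0 ≤ a * PS₁ A := fun A => mul_nonneg ha (hPS₁.1 A)
  have h₂ : ∀ A, 0 ≤ b * PS₂ A := fun A => mul_nonneg hb (hPS₂.1 A)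
  -- `W A` is the conditional kernel of the mixture given `S = A`
  let W : ∀ A : SetsK m k, (∀ i : A.1, X i.1) → Y → ℝ := fun A =>
    weightedMix (a * PS₁ A) (b * PS₂ A) (W₁ A) (W₂ A)
  have hjoint : ∀ A xA y, (a • PS₁ + b • PS₂) A * W A xA y =
      a * PS₁ A * W₁ A xA y + b * PS₂ A * W₂ A xA y := fun A xA y =>
    congrFun (congrFun (add_smul_weightedMix (w₁ := W₁ A) (w₂ := W₂ A) (h₁ A) (h₂ A)) xA) y
  refine ⟨a • PS₁ + b • PS₂, W, convex_stdSimplex ℝ _ hPS₁ hPS₂ ha hb hab,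
    fun A => convex_setOf_forall_isPMF.weightedMix_mem (hW₁ A) (hW₂ A) (h₁ A) (h₂ A), ?_, ?_⟩
  · simp only [expDistIRS, mul_sum, ← sum_add_distrib]
    refine sum_congr rfl fun A _ => sum_congr rfl fun x _ => sum_congr rfl fun y _ => ?_
    linear_combination P x * d x y * hjoint A (restr A.1 x) y
  · simp only [condMI, mul_sum, ← sum_add_distrib]
    refine sum_le_sum fun A _ => ?_
    have := (convexOn_mutInfo_mul_kernel (margA_nonneg A.1 hP)).add_mul_weightedMix_le
      (hW₁ A) (hW₂ A) (h₁ A) (h₂ A)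
    simp only [Pi.add_apply, Pi.smul_apply, smul_eq_mul]
    linarith

end Scheme

section RateDistortion

variable {k : ℕ} {P : (∀ i, X i) → ℝ} {d : (∀ i, X i) → Y → ℝ}

omit [∀ i, Nonempty (X i)] [Nonempty Y] in
theorem Ri_eq_sInf (Δ : ℝ) :
    Ri k P d Δ = sInf {r | ∃ z ∈ {z : (SetsK m k → ℝ) ×
        (∀ A : SetsK m k, (∀ i : A.1, X i.1) → Y → ℝ) | IsPMF z.1 ∧ IsKernelW k z.2},
      expDistIRS k P d z.1 z.2 ≤ Δ ∧ condMI k P z.1 z.2 = r} := by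
  simp only [Ri, Prod.exists, Set.mem_ofPred_eq, and_assoc]

theorem exists_scheme_expDistIRS_le (hP : ∀ x, 0 < P x) (hkm : k ≤ m) {Δ : ℝ}
    (hΔ : sInf (Set.range fun A : SetsK m k => DminA P d A.1) ≤ Δ) :
    ∃ (PS : SetsK m k → ℝ) (W : ∀ A : SetsK m k, (∀ i : A.1, X i.1) → Y → ℝ),
      IsPMF PS ∧ IsKernelW k W ∧ expDistIRS k P d PS W ≤ Δ := by
  have : Nonempty (SetsK m k) :=
    let ⟨A, hA⟩ := (powersetCard_nonempty (s := univ)).2 (by simpa using hkm)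
    ⟨⟨A, (mem_powersetCard.1 hA).2⟩⟩
  obtain ⟨A, hA⟩ :=
    (Set.range_nonempty fun A : SetsK m k => DminA P d A.1).csInf_mem (Set.finite_range _)
  obtain ⟨V, hV, hdist⟩ := exists_kernel_sum_eq_DminA (P := P) (d := d) A.1
  obtain ⟨PS, W, hPS, hW, hE, -⟩ := exists_scheme_of_kernel hP A hV (d := d)
  exact ⟨PS, W, hPS, hW, (hE.trans hdist).trans_le (hA.trans_le hΔ)⟩

theorem convexOn_Ri (hP : IsPMF P) (hfull : ∀ x, 0 < P x) (hkm : k ≤ m) :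
    ConvexOn ℝ (Set.Ici (sInf (Set.range fun A : SetsK m k => DminA P d A.1)))
      fun Δ => Ri k P d Δ := by
  simp only [Ri_eq_sInf]
  refine convexOn_sInf_of_exists_mix (convex_Ici _) ⟨0, ?_⟩ ?_ ?_
  · rintro _ ⟨z, ⟨hPS, hW⟩, rfl⟩
    exact condMI_nonneg hP hPS.1 hW
  · intro Δ hΔ
    obtain ⟨PS, W, hPS, hW, hE⟩ := exists_scheme_expDistIRS_le hfull hkm hΔ
    exact ⟨(PS, W), ⟨hPS, hW⟩, hE⟩
  · rintro ⟨PS₁, W₁⟩ ⟨hPS₁, hW₁⟩ ⟨PS₂, W₂⟩ ⟨hPS₂, hW₂⟩ a b ha hb hab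
    obtain ⟨PS, W, hPS, hW, hE, hI⟩ := exists_scheme_mix hP.1 hPS₁ hPS₂ hW₁ hW₂ ha hb hab (d := d)
    exact ⟨(PS, W), ⟨hPS, hW⟩, hE.le, hI⟩

theorem Ri_le_RAk (hP : IsPMF P) (hfull : ∀ x, 0 < P x) (A : SetsK m k) {Δ : ℝ}
    (hΔ : DminA P d A.1 ≤ Δ) : Ri k P d Δ ≤ RAk P d A.1 Δ := by
  refine csInf_le_csInf ⟨0, ?_⟩ ?_ ?_
  · rintro _ ⟨PS, W, hPS, hW, -, rfl⟩
    exact condMI_nonneg hP hPS.1 hW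
  · obtain ⟨V, hV, hdist⟩ := exists_kernel_sum_eq_DminA (P := P) (d := d) A.1
    exact ⟨_, _, (isPMF_margA A.1 hP).mul_kernel hV, sum_mul_of_isPMF hV, hdist.le.trans hΔ, rfl⟩
  · rintro _ ⟨Q, hQ, hrow, hdist, rfl⟩
    obtain ⟨V, hV, rfl⟩ := exists_kernel_of_sum_eq (margA_pos A.1 hfull) hQ.1 hrow
    obtain ⟨PS, W, hPS, hW, hE, hI⟩ := exists_scheme_of_kernel hfull A hV (d := d)
    exact ⟨PS, W, hPS, hW, hE ▸ hdist, hI⟩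

end RateDistortion

theorem stmt9_general (k : ℕ) (hkm : k ≤ m)
    (P : (∀ i, X i) → ℝ) (hP : IsPMF P) (hfull : ∀ x, 0 < P x)
    (d : (∀ i, X i) → Y → ℝ) :
    ConvexOn ℝ
      (Set.Icc (sInf (Set.range fun A : SetsK m k => DminA P d A.1))
        (Finset.univ.inf' Finset.univ_nonempty (fun y => ∑ x, P x * d x y)))
      (fun Δ => Ri k P d Δ) ∧
    (∀ Δ : ℝ, (∀ A : SetsK m k, DminA P d A.1 ≤ Δ) →
      Δ ≤ Finset.univ.inf' Finset.univ_nonempty (fun y => ∑ x, P x * d x y) →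
      ∀ A : SetsK m k, Ri k P d Δ ≤ RAk P d A.1 Δ) :=
  ⟨(convexOn_Ri hP hfull hkm).subset Set.Icc_subset_Ici_self (convex_Icc _ _),
    fun _ hΔ _ A => Ri_le_RAk hP hfull A (hΔ A)⟩

/-- `Δ ↦ R_i(Δ)` is convex on `[Δ_min, Δ_max]`, and whenever
`Δ_min,A ≤ Δ` for every `A ∈ 𝒜_k` (i.e. `max_A Δ_min,A ≤ Δ`) and `Δ ≤ Δ_max`, one has
`R_i(Δ) ≤ R_A(Δ)` for every `A ∈ 𝒜_k` (i.e. `R_i(Δ) ≤ min_A R_A(Δ)`). -/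
theorem stmt9 (k : ℕ) (hk1 : 1 ≤ k) (hkm : k ≤ m)
    (P : (∀ i, X i) → ℝ) (hP : IsPMF P) (hfull : ∀ x, 0 < P x)
    (d : (∀ i, X i) → Y → ℝ) (hd : ∀ x y, 0 ≤ d x y) :
    ConvexOn ℝ
      (Set.Icc (sInf (Set.range fun A : SetsK m k => DminA P d A.1))
        (Finset.univ.inf' Finset.univ_nonempty (fun y => ∑ x, P x * d x y)))
      (fun Δ => Ri k P d Δ) ∧
    (∀ Δ : ℝ, (∀ A : SetsK m k, DminA P d A.1 ≤ Δ) →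
      Δ ≤ Finset.univ.inf' Finset.univ_nonempty (fun y => ∑ x, P x * d x y) →
      ∀ A : SetsK m k, Ri k P d Δ ≤ RAk P d A.1 Δ) :=
  stmt9_general k hkm P hP hfull d
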